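/- Let q ≥ 2 and j ≥ 2, and define b_{j,m,n} by b_{j,m,1} = [1^m 0^j]_q and b_{j,m,n+1} = b_{j,m,n} - (q^{j+m-n} - 1). Fix s with 1 < s < q and write s̄ = q - s. Then for all 1 ≤ n ≤ q^{j-1} + 1 and m ≥ n, b_{j,m,n} lies in the interval [[s̄^{j+m-n}]_q, [1^{j+m-n} 0]_q], i.e. s̄ · (q^{j+m-n} - 1)/(q-1) ≤ b_{j,m,n} ≤ q · (q^{j+m-n} - 1)/(q-1). -/

import Mathlib

/-!
Subtracting `q^{j+m-t-1} - 1` removes the top digit of `[1^{m-t} 0^j]_q` and adds `1`, so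
`b_{j,m,n} = [1^{m-n+1} 0^j]_q + (n - 1)`. This number has top digit `q^{j+m-n}`, which exceeds
`q^{j+m-n} - 1 ≥ [s̄^{j+m-n}]_q`. On the other side `[1^{j+m-n} 0]_q` has the same digits as
`[1^{m-n+1} 0^j]_q` in positions `≥ j`, plus the digits `[1^{j-1} 0]_q ≥ q^{j-1} ≥ n - 1` below.
-/

/-- `[1^m 0^j]_q = ∑_{i<m} q^{j+i}`. -/
def onesZeros (q j m : ℕ) : ℕ := ∑ i ∈ Finset.range m, q ^ (j + i)

/-- `bSeq q j m t` is `b_{j,m,t+1}`, defined by `b_{j,m,1} = [1^m 0^j]_q`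
and `b_{j,m,n+1} = b_{j,m,n} - (q^{j+m-n} - 1)`. -/
def bSeq (q j m : ℕ) : ℕ → ℕ
  | 0 => onesZeros q j m
  | t + 1 => bSeq q j m t - (q ^ (j + m - t - 1) - 1)

open Finset

lemma onesZeros_succ (q j r : ℕ) : onesZeros q j (r + 1) = onesZeros q j r + q ^ (j + r) :=
  sum_range_succ _ _

lemma bSeq_eq_onesZeros_add {q : ℕ} (hq : 0 < q) (j m : ℕ) :
    ∀ t ≤ m, bSeq q j m t = onesZeros q j (m - t) + t := by
  intro t
  induction t with
  | zero => intro _; rfl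
  | succ t ih =>
    intro ht
    have hm : m - t = m - (t + 1) + 1 := by omega
    have hpow : 1 ≤ q ^ (j + (m - (t + 1))) := Nat.one_le_pow _ _ hq
    rw [bSeq, ih (by omega), hm, onesZeros_succ, show j + m - t - 1 = j + (m - (t + 1)) by omega]
    omega

lemma pow_le_mul_geomSum (q : ℕ) {a : ℕ} (ha : 1 ≤ a) : q ^ a ≤ q * ∑ i ∈ range a, q ^ i := by
  obtain ⟨b, rfl⟩ : ∃ b, a = b + 1 := ⟨a - 1, by omega⟩
  rw [pow_succ', sum_range_succ]
  exact Nat.mul_le_mul_left q (Nat.le_add_left _ _)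

lemma mul_geomSum_add (q a r : ℕ) :
    q * ∑ i ∈ range (a + r), q ^ i = q * ∑ i ∈ range a, q ^ i + onesZeros q (a + 1) r := by
  rw [sum_range_add, mul_add, onesZeros]
  congr 1
  rw [mul_sum]
  exact sum_congr rfl fun i _ => by ring

theorem stmt7_general (q j s : ℕ) (hq : 2 ≤ q) (hj : 2 ≤ j) (hs1 : 1 < s)
    (n m : ℕ) (hn1 : 1 ≤ n) (hn2 : n ≤ q ^ (j - 1) + 1) (hm : n ≤ m) :
    (q - s) * (q ^ (j + m - n) - 1) / (q - 1) ≤ bSeq q j m (n - 1) ∧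
      bSeq q j m (n - 1) ≤ q * (q ^ (j + m - n) - 1) / (q - 1) := by
  have hb : bSeq q j m (n - 1) = onesZeros q j (m - n + 1) + (n - 1) := by
    rw [bSeq_eq_onesZeros_add (by omega) j m (n - 1) (by omega), show m - (n - 1) = m - n + 1 by omega]
  constructor
  · calc (q - s) * (q ^ (j + m - n) - 1) / (q - 1)
        ≤ q ^ (j + m - n) - 1 := Nat.div_le_of_le_mul (Nat.mul_le_mul_right _ (by omega))
      _ ≤ onesZeros q j (m - n + 1) := by
        rw [onesZeros_succ, show j + m - n = j + (m - n) by omega]; omega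
      _ ≤ bSeq q j m (n - 1) := hb ▸ Nat.le_add_right _ _
  · have hlow : n - 1 ≤ q * ∑ i ∈ range (j - 1), q ^ i :=
      le_trans (by omega) (pow_le_mul_geomSum q (a := j - 1) (by omega))
    calc bSeq q j m (n - 1)
        ≤ q * ∑ i ∈ range (j - 1), q ^ i + onesZeros q (j - 1 + 1) (m - n + 1) := by
          rw [hb, Nat.sub_add_cancel (by omega : 1 ≤ j)]; omega
      _ = q * ∑ i ∈ range (j + m - n), q ^ i := by
          rw [← mul_geomSum_add, show j - 1 + (m - n + 1) = j + m - n by omega]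
      _ = q * (q ^ (j + m - n) - 1) / (q - 1) := by
          rw [Nat.geomSum_eq hq, Nat.mul_div_assoc _ (Nat.sub_one_dvd_pow_sub_one _ _)]

/-- for `q ≥ 2`, `j ≥ 2`, `1 < s < q`, `1 ≤ n ≤ q^{j-1}+1`, `m ≥ n`:
`s̄·(q^{j+m-n}-1)/(q-1) ≤ b_{j,m,n} ≤ q·(q^{j+m-n}-1)/(q-1)` with `s̄ = q - s`. -/
theorem stmt7 (q j s : ℕ) (hq : 2 ≤ q) (hj : 2 ≤ j) (hs1 : 1 < s) (hsq : s < q)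
    (n m : ℕ) (hn1 : 1 ≤ n) (hn2 : n ≤ q ^ (j - 1) + 1) (hm : n ≤ m) :
    (q - s) * (q ^ (j + m - n) - 1) / (q - 1) ≤ bSeq q j m (n - 1) ∧
      bSeq q j m (n - 1) ≤ q * (q ^ (j + m - n) - 1) / (q - 1) :=
  stmt7_general q j s hq hj hs1 n m hn1 hn2 hm
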